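/- arXiv:math/0405336 — 4 statements merged into one kernel-verified Lean document; each statement's English description precedes it below -/
import Mathlib

section
/- Let G be a group with a normal subgroup A, and let B = HA for a subgroup H, where B is abnormal in G. If H is abnormal in B, then H is abnormal in G. -/
/-- The conjugate subgroup `H^g = g⁻¹Hg`. -/
def conjSub {G : Type*} [Group G] (g : G) (H : Subgroup G) : Subgroup G :=
  H.map (MulAut.conj g⁻¹).toMonoidHom

/-- `H` is abnormal in `G`: `g ∈ ⟨H, H^g⟩` for every `g ∈ G`. -/
def IsAbnormal {G : Type*} [Group G] (H : Subgroup G) : Prop :=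
  ∀ g : G, g ∈ H ⊔ conjSub g H

/-- `H` is abnormal in the subgroup `B`: `H ≤ B` and `g ∈ ⟨H, H^g⟩` for every `g ∈ B`. -/
def IsAbnormalIn {G : Type*} [Group G] (H B : Subgroup G) : Prop :=
  H ≤ B ∧ ∀ g ∈ B, g ∈ H ⊔ conjSub g H

open scoped Pointwise in
theorem abnormal_of_abnormal_in_abnormal_product {G : Type*} [Group G]
    (H A B : Subgroup G) [A.Normal] (hB : B = H ⊔ A)
    (hBab : IsAbnormal B) (hHab : IsAbnormalIn H B) : IsAbnormal H := by
  intro g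
  set D : Subgroup G := H ⊔ conjSub g H with hD
  -- conjSub g A = A
  have hA : conjSub g A = A := by
    ext x
    constructor
    · rintro ⟨a, ha, rfl⟩
      simpa using ‹A.Normal›.conj_mem a ha g⁻¹
    · intro hx
      exact ⟨g * x * g⁻¹, ‹A.Normal›.conj_mem x hx g, by simp [mul_assoc]⟩
  -- B ⊔ conjSub g B = D ⊔ A
  have hsup : B ⊔ conjSub g B = D ⊔ A := by
    have : conjSub g B = conjSub g H ⊔ A := by
      rw [hB]; unfold conjSub
      rw [Subgroup.map_sup]
      exact congrArg _ hA
    rw [this, hB, hD, sup_sup_sup_comm, sup_idem]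
  have hg : g ∈ D ⊔ A := hsup ▸ hBab g
  -- g = a * d with a ∈ A, d ∈ D
  rw [sup_comm] at hg
  have hg' : g ∈ ((A : Set G) * (D : Set G)) := (Subgroup.normal_mul A D) ▸ hg
  obtain ⟨a, ha, d, hd, hgad⟩ := hg'
  have haB : a ∈ B := hB ▸ Subgroup.mem_sup_right ha
  have haD : a ∈ D := by
    have h1 : a ∈ H ⊔ conjSub a H := hHab.2 a haB
    have h2 : H ⊔ conjSub a H ≤ D := by
      apply sup_le le_sup_left
      rintro x ⟨h, hh, rfl⟩
      have hx : g⁻¹ * h * g ∈ D :=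
        Subgroup.mem_sup_right ⟨h, hh, by simp [mul_assoc]⟩
      have ha' : a = g * d⁻¹ := by rw [← hgad]; group
      have : (MulAut.conj a⁻¹).toMonoidHom h = d * (g⁻¹ * h * g) * d⁻¹ := by
        simp [ha', mul_assoc]
      rw [this]
      exact Subgroup.mul_mem _ (Subgroup.mul_mem _ hd hx) (Subgroup.inv_mem _ hd)
    exact h2 h1
  rw [← hgad]
  exact Subgroup.mul_mem _ haD hd
end

section
/- A nilpotent group has no proper abnormal subgroups: if G is a nilpotent group and H is an abnormal subgroup of G, then H = G. -/
theorem nilpotent_no_proper_abnormal {G : Type*} [Group G]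
    [Group.IsNilpotent G] (H : Subgroup G) (hH : IsAbnormal H) : H = ⊤ := by
  by_contra hne
  have hnc : NormalizerCondition G := normalizerCondition_of_isNilpotent
  have hlt := hnc H (lt_top_iff_ne_top.mpr hne)
  obtain ⟨g, hgN, hgH⟩ := SetLike.exists_of_lt hlt
  -- g normalizes H, so conjSub g H = H
  have hconj : conjSub g H = H := by
    ext x
    constructor
    · rintro ⟨h, hh, rfl⟩
      simpa [mul_assoc] using (Subgroup.mem_normalizer_iff.mp (inv_mem hgN) h).mp hh
    · intro hx
      exact ⟨g * x * g⁻¹, (Subgroup.mem_normalizer_iff.mp hgN x).mp hx, by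
        simp [mul_assoc]⟩
  have := hH g
  rw [hconj, sup_idem] at this
  exact hgH this
end

section
/- Let G be a finite solvable group and H a subgroup of G. Then H is abnormal in G if and only if every subgroup S with H ≤ S ≤ G satisfies N_G(S) = S. -/
open Subgroup
open scoped commutatorElement

section Conjugation

variable {G : Type*} [Group G]

lemma conj_mem_conjSub {H : Subgroup G} {x : G} (g : G) (hx : x ∈ H) :
    g⁻¹ * x * g ∈ conjSub g H :=
  ⟨x, hx, by simp⟩

lemma conjSub_mono {H K : Subgroup G} (g : G) (h : H ≤ K) : conjSub g H ≤ conjSub g K :=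
  map_mono h

lemma conjSub_sup (g : G) (H K : Subgroup G) : conjSub g (H ⊔ K) = conjSub g H ⊔ conjSub g K :=
  map_sup H K _

lemma conjSub_mul (a b : G) (H : Subgroup G) :
    conjSub (a * b) H = conjSub b (conjSub a H) := by
  simp only [conjSub, map_map]
  congr 1
  ext x
  simp [mul_assoc]

lemma conjSub_eq_iff_inv_mem_normalizer {g : G} {S : Subgroup G} :
    conjSub g S = S ↔ g⁻¹ ∈ normalizer (S : Set G) :=
  mem_normalizer_iff_map_conj_eq.symm

lemma conjSub_of_mem {g : G} {S : Subgroup G} (hg : g ∈ S) : conjSub g S = S :=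
  conjSub_eq_iff_inv_mem_normalizer.mpr (le_normalizer (S.inv_mem hg))

lemma conjSub_of_normal (g : G) {N : Subgroup G} [N.Normal] : conjSub g N = N :=
  conjSub_eq_iff_inv_mem_normalizer.mpr (normalizer_eq_top (H := N) ▸ mem_top _)

lemma conjSub_eq_of_le [Finite G] {g : G} {S : Subgroup G} (h : conjSub g S ≤ S) :
    conjSub g S = S :=
  eq_of_le_of_card_ge h (card_map_of_injective (MulAut.conj g⁻¹).injective).ge

lemma conjSub_le_of_eq_mul {H K : Subgroup G} {g n k : G} (hgK : conjSub g H ≤ K) (hk : k ∈ K)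
    (hg : g = n * k) : conjSub n H ≤ K := by
  have hn : n = g * k⁻¹ := by rw [hg, mul_inv_cancel_right]
  rw [hn, conjSub_mul, ← conjSub_of_mem (K.inv_mem hk)]
  exact conjSub_mono _ hgK

end Conjugation

lemma IsAbnormal.normalizer_eq {G : Type*} [Group G] {H S : Subgroup G} (hH : IsAbnormal H)
    (hHS : H ≤ S) : normalizer (S : Set G) = S := by
  refine le_antisymm (fun g hg ↦ ?_) le_normalizer
  have hS : conjSub g S = S := conjSub_eq_iff_inv_mem_normalizer.mpr (inv_mem hg)
  exact sup_le hHS (hS ▸ conjSub_mono g hHS) (hH g)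

section DerivedSeries

variable {G : Type*} [Group G] {H K A : Subgroup G} {n : G}

lemma conjSub_le_sup_inf_sup_commutator [hA : A.Normal] (hHK : H ≤ K) (hn : n ∈ A)
    (hnK : conjSub n H ≤ K) :
    conjSub n (H ⊔ K ⊓ A ⊔ ⁅A, A⁆) ≤ H ⊔ K ⊓ A ⊔ ⁅A, A⁆ := by
  rw [conjSub_sup, conjSub_sup, conjSub_of_normal n (N := ⁅A, A⁆)]
  refine sup_le (sup_le ?_ ?_) le_sup_right
  · rintro _ ⟨x, hx, rfl⟩
    -- `n⁻¹ x n = x ⁅x⁻¹, n⁻¹⁆`, and `⁅x⁻¹, n⁻¹⁆` lies in `K` because `x` and `n⁻¹ x n` do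
    have hK : x⁻¹ * (n⁻¹ * x * n) ∈ K :=
      K.mul_mem (K.inv_mem (hHK hx)) (hnK (conj_mem_conjSub n hx))
    have hxA : (x⁻¹ * n⁻¹ * x) * n ∈ A := A.mul_mem (hA.conj_mem' _ (A.inv_mem hn) x) hn
    have hKA : x⁻¹ * n⁻¹ * x * n ∈ K ⊓ A :=
      mem_inf.mpr ⟨by simpa only [mul_assoc] using hK, hxA⟩
    have hM : x * (x⁻¹ * n⁻¹ * x * n) ∈ H ⊔ K ⊓ A := mul_mem_sup hx hKA
    simpa [mul_assoc] using mem_sup_left hM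
  · rintro _ ⟨y, hy, rfl⟩
    have hc : ⁅y⁻¹, n⁻¹⁆ ∈ ⁅A, A⁆ := commutator_mem_commutator (A.inv_mem hy.2) (A.inv_mem hn)
    have hM := mul_mem_sup (mem_sup_right hy : y ∈ H ⊔ K ⊓ A) hc
    simpa [commutatorElement_def, mul_assoc] using hM

variable [Finite G]

lemma mem_sup_commutator_of_mem_sup [A.Normal] {g : G}
    (hself : ∀ S : Subgroup G, H ≤ S → normalizer (S : Set G) = S) (hHK : H ≤ K)
    (hgK : conjSub g H ≤ K) (hg : g ∈ K ⊔ A) : g ∈ K ⊔ ⁅A, A⁆ := by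
  obtain ⟨n, hn, k, hk, rfl⟩ := mem_sup_of_normal_left.mp (sup_comm K A ▸ hg)
  have hnK : conjSub n H ≤ K := conjSub_le_of_eq_mul hgK hk rfl
  set M := H ⊔ K ⊓ A ⊔ ⁅A, A⁆
  have hM : conjSub n M = M := conjSub_eq_of_le (conjSub_le_sup_inf_sup_commutator hHK hn hnK)
  have hnM : n ∈ M := by
    rw [← inv_mem_iff, ← hself M (le_sup_left.trans le_sup_left)]
    exact conjSub_eq_iff_inv_mem_normalizer.mp hM
  have hMK : M ≤ K ⊔ ⁅A, A⁆ := sup_le_sup_right (sup_le hHK inf_le_left) _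
  exact mul_mem (hMK hnM) (mem_sup_left hk)

lemma mem_sup_derivedSeries {g : G}
    (hself : ∀ S : Subgroup G, H ≤ S → normalizer (S : Set G) = S) (hHK : H ≤ K)
    (hgK : conjSub g H ≤ K) (i : ℕ) :
    g ∈ K ⊔ derivedSeries G i := by
  induction i with
  | zero => simp
  | succ i ih =>
    rw [derivedSeries_succ]
    exact mem_sup_commutator_of_mem_sup hself hHK hgK ih

end DerivedSeries

theorem taunt_criterion_finite_solvable {G : Type*} [Group G] [Finite G]
    [Group.IsSolvable G] (H : Subgroup G) :
    IsAbnormal H ↔ ∀ S : Subgroup G, H ≤ S → Subgroup.normalizer (S : Set G) = S := by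
  refine ⟨fun hH S hHS ↦ hH.normalizer_eq hHS, fun hself g ↦ ?_⟩
  obtain ⟨m, hm⟩ := Group.IsSolvable.solvable (G := G)
  simpa [hm] using mem_sup_derivedSeries hself le_sup_left le_sup_right m
end

section
/- Let G be a solvable group (possibly infinite) and H a subgroup of G. If H is abnormal in G, then every intermediate subgroup S with H ≤ S ≤ G is self-normalizing in G; conversely, if every intermediate subgroup for H is self-normalizing in G, then H is abnormal in G. -/
open scoped Pointwise commutatorElement


lemma mem_conjSub {G : Type*} [Group G] {g h : G} {H : Subgroup G} (hh : h ∈ H) :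
    g⁻¹ * h * g ∈ conjSub g H := by
  refine Subgroup.mem_map.mpr ⟨h, hh, ?_⟩
  simp [MulAut.conj]

lemma conjSub_mem {G : Type*} [Group G] {g x : G} {H : Subgroup G}
    (hx : x ∈ conjSub g H) : ∃ h ∈ H, x = g⁻¹ * h * g := by
  obtain ⟨h, hh, rfl⟩ := Subgroup.mem_map.mp hx
  exact ⟨h, hh, by simp [MulAut.conj]⟩

/-- Key computational lemma: if `A` is an abelian normal subgroup, `a ∈ A`, and
every subgroup containing `H` is self-normalizing, then `a ∈ ⟨H, H^a⟩`. -/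
lemma key_abelian {G : Type*} [Group G] (H A : Subgroup G) [A.Normal]
    (hA : ∀ x ∈ A, ∀ y ∈ A, x * y = y * x)
    (hyp : ∀ S : Subgroup G, H ≤ S → Subgroup.normalizer (S : Set G) = S)
    {a : G} (ha : a ∈ A) : a ∈ H ⊔ conjSub a H := by
  set L := H ⊔ conjSub a H with hLdef
  have hcA : ∀ h : G, h⁻¹ * a⁻¹ * h * a ∈ A := by
    intro h
    have : h⁻¹ * a⁻¹ * h ∈ A := by
      have := (‹A.Normal›).conj_mem a⁻¹ (inv_mem ha) h⁻¹
      simpa [mul_assoc] using this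
    simpa [mul_assoc] using mul_mem this ha
  have hcomm : ∀ h : G, a * (h⁻¹ * a⁻¹ * h * a) = (h⁻¹ * a⁻¹ * h * a) * a :=
    fun h => hA a ha _ (hcA h)
  -- conjugation-invariance of the commutator under a
  have econj : ∀ h : G, a * (h⁻¹ * a⁻¹ * h * a) * a⁻¹ = h⁻¹ * a⁻¹ * h * a := by
    intro h; rw [hcomm h]; group
  have econj' : ∀ h : G, a⁻¹ * (h⁻¹ * a⁻¹ * h * a) * a = h⁻¹ * a⁻¹ * h * a := by
    intro h
    calc a⁻¹ * (h⁻¹ * a⁻¹ * h * a) * a = a⁻¹ * ((h⁻¹ * a⁻¹ * h * a) * a) := by group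
      _ = a⁻¹ * (a * (h⁻¹ * a⁻¹ * h * a)) := by rw [hcomm h]
      _ = h⁻¹ * a⁻¹ * h * a := by group
  -- F1 : a * h * a⁻¹ ∈ L for h ∈ H
  have F1 : ∀ h ∈ H, a * h * a⁻¹ ∈ L := by
    intro h hh
    have eq2 : a * h⁻¹ * a⁻¹ * h = h⁻¹ * a⁻¹ * h * a := by
      calc a * h⁻¹ * a⁻¹ * h = a * (h⁻¹ * a⁻¹ * h * a) * a⁻¹ := by group
        _ = h⁻¹ * a⁻¹ * h * a := econj h
    have eq3 : h⁻¹ * a * h * a⁻¹ = a⁻¹ * h⁻¹ * a * h := by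
      calc h⁻¹ * a * h * a⁻¹ = (a * h⁻¹ * a⁻¹ * h)⁻¹ := by group
        _ = (h⁻¹ * a⁻¹ * h * a)⁻¹ := by rw [eq2]
        _ = a⁻¹ * h⁻¹ * a * h := by group
    have hid : a * h * a⁻¹ = h * (a⁻¹ * h⁻¹ * a) * h := by
      calc a * h * a⁻¹ = h * (h⁻¹ * a * h * a⁻¹) := by group
        _ = h * (a⁻¹ * h⁻¹ * a * h) := by rw [eq3]
        _ = h * (a⁻¹ * h⁻¹ * a) * h := by group
    rw [hid]
    have m1 : h ∈ L := Subgroup.mem_sup_left hh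
    have m2 : a⁻¹ * h⁻¹ * a ∈ L := Subgroup.mem_sup_right (mem_conjSub (inv_mem hh))
    exact mul_mem (mul_mem m1 m2) m1
  -- F2 : a⁻¹ * (a⁻¹ * h * a) * a ∈ L for h ∈ H
  have F2 : ∀ h ∈ H, a⁻¹ * (a⁻¹ * h * a) * a ∈ L := by
    intro h hh
    have hid : a⁻¹ * (a⁻¹ * h * a) * a = (a⁻¹ * h * a) * h⁻¹ * (a⁻¹ * h * a) := by
      calc a⁻¹ * (a⁻¹ * h * a) * a
          = (a⁻¹ * h * a) * (a⁻¹ * (h⁻¹ * a⁻¹ * h * a) * a) := by group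
        _ = (a⁻¹ * h * a) * (h⁻¹ * a⁻¹ * h * a) := by rw [econj' h]
        _ = (a⁻¹ * h * a) * h⁻¹ * (a⁻¹ * h * a) := by group
    rw [hid]
    have m1 : a⁻¹ * h * a ∈ L := Subgroup.mem_sup_right (mem_conjSub hh)
    have m2 : h⁻¹ ∈ L := Subgroup.mem_sup_left (inv_mem hh)
    exact mul_mem (mul_mem m1 m2) m1
  -- (i) : x ∈ L → a * x * a⁻¹ ∈ L
  have inc1 : ∀ x ∈ L, a * x * a⁻¹ ∈ L := by
    have hle : L ≤ Subgroup.comap (MulAut.conj a).toMonoidHom L := by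
      rw [hLdef]
      refine sup_le ?_ ?_
      · intro h hh
        rw [Subgroup.mem_comap]
        show a * h * a⁻¹ ∈ L
        exact F1 h hh
      · intro y hy
        obtain ⟨h, hh, rfl⟩ := conjSub_mem hy
        rw [Subgroup.mem_comap]
        show a * (a⁻¹ * h * a) * a⁻¹ ∈ L
        rw [show a * (a⁻¹ * h * a) * a⁻¹ = h by group]
        exact Subgroup.mem_sup_left hh
    intro x hx
    exact Subgroup.mem_comap.mp (hle hx)
  -- (ii) : x ∈ L → a⁻¹ * x * a ∈ L
  have inc2 : ∀ x ∈ L, a⁻¹ * x * a ∈ L := by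
    have hle : L ≤ Subgroup.comap (MulAut.conj a⁻¹).toMonoidHom L := by
      rw [hLdef]
      refine sup_le ?_ ?_
      · intro h hh
        rw [Subgroup.mem_comap]
        show a⁻¹ * h * a⁻¹⁻¹ ∈ L
        rw [inv_inv]
        exact Subgroup.mem_sup_right (mem_conjSub hh)
      · intro y hy
        obtain ⟨h, hh, rfl⟩ := conjSub_mem hy
        rw [Subgroup.mem_comap]
        show a⁻¹ * (a⁻¹ * h * a) * a⁻¹⁻¹ ∈ L
        rw [inv_inv]
        exact F2 h hh
    intro x hx
    have h2 : a⁻¹ * x * a⁻¹⁻¹ ∈ L := Subgroup.mem_comap.mp (hle hx)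
    rwa [inv_inv] at h2
  have hnorm : a ∈ Subgroup.normalizer (L : Set G) := by
    rw [Subgroup.mem_normalizer_iff]
    intro x
    constructor
    · exact fun hx => inc1 x hx
    · intro hx
      have := inc2 _ hx
      simpa [mul_assoc] using this
  rw [hyp L le_sup_left] at hnorm
  exact hnorm

universe u

lemma taunt_converse_aux (n : ℕ) : ∀ (G : Type u) [Group G] (H : Subgroup G),
    derivedSeries G n = ⊥ →
    (∀ S : Subgroup G, H ≤ S → Subgroup.normalizer (S : Set G) = S) → IsAbnormal H := by
  induction n with
  | zero =>
    intro G _ H hder _ g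
    have hg : g = 1 := by
      have : g ∈ (⊥ : Subgroup G) := by
        rw [← hder]
        rw [derivedSeries_zero]
        exact Subgroup.mem_top g
      exact Subgroup.mem_bot.mp this
    rw [hg]
    exact one_mem _
  | succ n ih =>
    intro G _ H hder hyp g
    set A := derivedSeries G n with hAdef
    haveI hAnorm : A.Normal := derivedSeries_normal G n
    have hAcomm : ∀ x ∈ A, ∀ y ∈ A, x * y = y * x := by
      intro x hx y hy
      have h1 : ⁅x, y⁆ ∈ ⁅A, A⁆ := Subgroup.commutator_mem_commutator hx hy
      rw [← derivedSeries_succ, hder, Subgroup.mem_bot] at h1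
      exact commutatorElement_eq_one_iff_mul_comm.mp h1
    set π := QuotientGroup.mk' A with hπ
    have hπsurj : Function.Surjective π := QuotientGroup.mk'_surjective A
    have hQder : derivedSeries (G ⧸ A) n = ⊥ := by
      have h1 := derivedSeries_le_map_derivedSeries (f := π) hπsurj n
      have h2 : Subgroup.map π (derivedSeries G n) = ⊥ := by
        rw [Subgroup.map_eq_bot_iff, QuotientGroup.ker_mk']
      rw [← le_bot_iff]
      exact le_trans h1 (le_of_eq h2)
    have hQhyp : ∀ S : Subgroup (G ⧸ A), Subgroup.map π H ≤ S → Subgroup.normalizer (S : Set (G ⧸ A)) = S := by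
      intro Sb hSb
      refine le_antisymm ?_ Subgroup.le_normalizer
      intro xb hxb
      obtain ⟨x, rfl⟩ := hπsurj xb
      have hHle : H ≤ Subgroup.comap π Sb :=
        le_trans (Subgroup.le_comap_map π H) (Subgroup.comap_mono hSb)
      have hx : x ∈ Subgroup.normalizer ((Subgroup.comap π Sb : Subgroup G) : Set G) := by
        rw [Subgroup.mem_normalizer_iff]
        intro y
        rw [Subgroup.mem_comap, Subgroup.mem_comap]
        rw [Subgroup.mem_normalizer_iff.mp hxb (π y)]
        simp [map_mul, map_inv]
      rw [hyp _ hHle] at hx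
      exact hx
    have habQ : IsAbnormal (Subgroup.map π H) := ih (G ⧸ A) (Subgroup.map π H) hQder hQhyp
    set K := H ⊔ conjSub g H with hKdef
    have hconjmap : conjSub (π g) (Subgroup.map π H) = Subgroup.map π (conjSub g H) := by
      unfold conjSub
      rw [Subgroup.map_map, Subgroup.map_map]
      have hhom : ((MulAut.conj (π g)⁻¹).toMonoidHom.comp (π : G →* G ⧸ A))
          = (π : G →* G ⧸ A).comp (MulAut.conj g⁻¹).toMonoidHom := by
        ext x
        show (π g)⁻¹ * π x * ((π g)⁻¹)⁻¹ = π (g⁻¹ * x * g⁻¹⁻¹)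
        simp [map_mul, map_inv, inv_inv]
      rw [hhom]
    have h1 : π g ∈ Subgroup.map π K := by
      have := habQ (π g)
      rwa [hconjmap, ← Subgroup.map_sup, ← hKdef] at this
    have hgKA : g ∈ A ⊔ K := by
      have : g ∈ Subgroup.comap π (Subgroup.map π K) := h1
      rw [Subgroup.comap_map_eq, QuotientGroup.ker_mk'] at this
      rwa [sup_comm] at this
    have hgmem : (g : G) ∈ (A : Set G) * (K : Set G) := by
      rw [← Subgroup.normal_mul]
      exact hgKA
    obtain ⟨a, ha, k, hk, hak⟩ := Set.mem_mul.mp hgmem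
    have hgK : conjSub g H ≤ K := le_sup_right
    have hconjK : conjSub a H ≤ K := by
      intro x hx
      obtain ⟨h, hh, rfl⟩ := conjSub_mem hx
      have hainv : a = g * k⁻¹ := by rw [← hak]; group
      have : a⁻¹ * h * a = k * (g⁻¹ * h * g) * k⁻¹ := by rw [hainv]; group
      rw [this]
      exact mul_mem (mul_mem hk (hgK (mem_conjSub hh))) (inv_mem hk)
    have haK : a ∈ K := by
      have := key_abelian H A hAcomm hyp ha
      exact (sup_le (le_sup_left : H ≤ K) hconjK) this
    rw [← hak]
    exact mul_mem haK hk

theorem taunt_criterion_solvable {G : Type*} [Group G] [Group.IsSolvable G]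
    (H : Subgroup G) :
    IsAbnormal H ↔ ∀ S : Subgroup G, H ≤ S → Subgroup.normalizer (S : Set G) = S := by
  constructor
  · intro hab S hHS
    refine le_antisymm ?_ Subgroup.le_normalizer
    intro g hg
    have hconj : conjSub g H ≤ S := by
      intro x hx
      obtain ⟨h, hh, rfl⟩ := conjSub_mem hx
      refine (Subgroup.mem_normalizer_iff.mp hg (g⁻¹ * h * g)).mpr ?_
      rw [show g * (g⁻¹ * h * g) * g⁻¹ = h by group]
      exact hHS hh
    exact (sup_le hHS hconj) (hab g)
  · intro hyp
    obtain ⟨n, hn⟩ := Group.IsSolvable.solvable (G := G)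
    exact taunt_converse_aux n G H hn hyp
end
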